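/- For every n ≥ 9, if every pair in L'_{n-5} ⊗ (L_{n-4} ∪ R_{n-4}) is a smallest string attractor of the Fibonacci word F_{n-2}, then every pair in L'_{n-3} ⊗ R_{n-2} is a smallest string attractor of F_n. -/

import Mathlib

/-- Fibonacci numbers: f 0 = f 1 = 1, f (n+2) = f (n+1) + f n. -/
def fib : ℕ → ℕ
  | 0 => 1
  | 1 => 1
  | n + 2 => fib (n + 1) + fib n

/-- Fibonacci words over {a, b}; `false` encodes `a`, `true` encodes `b`. -/
def F : ℕ → List Bool
  | 0 => [true]
  | 1 => [false]
  | n + 2 => F (n + 1) ++ F n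

/-- Singular words: S 0 = a, S 1 = b, S 2 = S 0 · S₋₁ · S 0 = aa,
and S n = S (n-2) · S (n-3) · S (n-2) for n ≥ 3. -/
def S : ℕ → List Bool
  | 0 => [false]
  | 1 => [true]
  | 2 => [false, false]
  | n + 3 => S (n + 1) ++ S n ++ S (n + 1)

/-- `w` occurs in `T` at (1-based) position `i`, i.e. `w = T[i .. i + |w| - 1]`. -/
def OccursAt {α : Type*} (T w : List α) (i : ℕ) : Prop :=
  1 ≤ i ∧ i + w.length ≤ T.length + 1 ∧ (T.drop (i - 1)).take w.length = w

/-- `Γ` is a string attractor of `T`: a set of (1-based) positions of `T` such that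
every nonempty substring of `T` has an occurrence crossing a position of `Γ`. -/
def IsAttractor {α : Type*} (T : List α) (Γ : Finset ℕ) : Prop :=
  (∀ k ∈ Γ, 1 ≤ k ∧ k ≤ T.length) ∧
  ∀ w : List α, w ≠ [] → w <:+: T →
    ∃ i, OccursAt T w i ∧ ∃ k ∈ Γ, i ≤ k ∧ k < i + w.length

/-- `Γ` is a smallest string attractor of `T`. -/
def IsSmallestAttractor {α : Type*} (T : List α) (Γ : Finset ℕ) : Prop :=
  IsAttractor T Γ ∧ ∀ Γ' : Finset ℕ, IsAttractor T Γ' → Γ.card ≤ Γ'.card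

/-- The set of all smallest string attractors of `T`. -/
def Att {α : Type*} (T : List α) : Set (Finset ℕ) := {Γ | IsSmallestAttractor T Γ}

/-- The position sets L_k: L_2 = {3}, L_3 = {5},
L_k = (L_{k-2} ∪ R_{k-2}) ⊕ f_k for k ≥ 4 (with R_{k-2} = L_{k-2} ⊕ f_{k-3}). -/
def Lset : ℕ → Finset ℕ
  | 0 => ∅
  | 1 => ∅
  | 2 => {3}
  | 3 => {5}
  | k + 4 => ((Lset (k + 2)) ∪ (Lset (k + 2)).image (· + fib (k + 1))).image (· + fib (k + 4))

/-- The position sets R_k = L_k ⊕ f_{k-1} (so R_2 = {4}, R_3 = {7}). -/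
def Rset (k : ℕ) : Finset ℕ := (Lset k).image (· + fib (k - 1))

/-- The position sets L'_k: L'_2 = {3, 4}, L'_3 = {5}, L'_k = L'_{k-2} ⊕ f_k for k ≥ 4. -/
def L'set : ℕ → Finset ℕ
  | 0 => ∅
  | 1 => ∅
  | 2 => {3, 4}
  | 3 => {5}
  | k + 4 => (L'set (k + 2)).image (· + fib (k + 4))

/-- X ⊗ Y := { {x, y} : x ∈ X, y ∈ Y }. -/
def pairSet (X Y : Finset ℕ) : Set (Finset ℕ) := {Γ | ∃ x ∈ X, ∃ y ∈ Y, Γ = {x, y}}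

/- ### Auxiliary lemmas -/

lemma fib_add2 (k : ℕ) : fib (k+2) = fib (k+1) + fib k := rfl

lemma fib_pos : ∀ k, 1 ≤ fib k
  | 0 => le_refl 1
  | 1 => le_refl 1
  | (k+2) => by rw [fib_add2]; have := fib_pos k; omega

lemma length_F : ∀ k, (F k).length = fib k
  | 0 => rfl
  | 1 => rfl
  | (k+2) => by
      rw [show F (k+2) = F (k+1) ++ F k from rfl, List.length_append,
        length_F (k+1), length_F k, fib_add2]

lemma F_eq (k : ℕ) : F (k+2) = F (k+1) ++ F k := rfl

/-- Window agreement: if two lists agree on their first `m` elements, windows inside agree. -/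
lemma window_eq {α : Type*} {A B : List α} {m j l : ℕ} (h : A.take m = B.take m)
    (hjl : j + l ≤ m) : (A.drop j).take l = (B.drop j).take l := by
  have h1 : ((A.take m).drop j).take l = ((B.take m).drop j).take l := by rw [h]
  rw [List.drop_take, List.drop_take, List.take_take, List.take_take,
    min_eq_left (by omega : l ≤ m - j)] at h1
  exact h1

lemma infix_of_window {α : Type*} (T : List α) (j l : ℕ) : (T.drop j).take l <:+: T := by
  obtain ⟨t, ht⟩ := List.take_prefix l (T.drop j)
  obtain ⟨s, hs⟩ := List.drop_suffix j T
  exact ⟨s, t, by rw [List.append_assoc, ht, hs]⟩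

/-- Near-commutation of consecutive Fibonacci words. -/
lemma comm_take : ∀ k, (F (k+1) ++ F k).take (fib (k+2) - 2)
    = (F k ++ F (k+1)).take (fib (k+2) - 2) := by
  intro k
  induction k with
  | zero => rfl
  | succ k ih =>
      simp only [show k+1+1 = k+2 from rfl, show k+1+2 = k+3 from rfl]
      have h2 : 2 ≤ fib (k+2) := by
        have := fib_pos k; have := fib_pos (k+1); rw [fib_add2]; omega
      have hsplit : fib (k+3) - 2 = (F (k+1)).length + (fib (k+2) - 2) := by
        rw [length_F, show fib (k+3) = fib (k+2) + fib (k+1) from rfl]; omega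
      rw [F_eq k, List.append_assoc, hsplit, List.take_length_add_append, List.take_length_add_append, ih]

lemma L'_bound : ∀ k x, x ∈ L'set k → fib (k+1) ≤ x ∧ x ≤ fib (k+1) + 1
  | 0, x, h => by simp [L'set] at h
  | 1, x, h => by simp [L'set] at h
  | 2, x, h => by
      simp [L'set] at h
      rcases h with rfl | rfl <;> simp [show fib 3 = 3 from rfl]
  | 3, x, h => by
      simp [L'set] at h
      simp [h, show fib 4 = 5 from rfl]
  | (k+4), x, h => by
      simp only [L'set, Finset.mem_image] at h
      obtain ⟨x', hx', rfl⟩ := h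
      have := L'_bound (k+2) x' hx'
      have e : fib (k+5) = fib (k+4) + fib (k+3) := rfl
      simp only [show k+2+1=k+3 from rfl, show k+4+1=k+5 from rfl] at *
      omega

lemma L_bound : ∀ k x, x ∈ Lset k → fib (k+1) ≤ x ∧ x + 1 ≤ 2 * fib k
  | 0, x, h => by simp [Lset] at h
  | 1, x, h => by simp [Lset] at h
  | 2, x, h => by simp [Lset] at h; simp [h, show fib 3 = 3 from rfl, show fib 2 = 2 from rfl]
  | 3, x, h => by simp [Lset] at h; simp [h, show fib 4 = 5 from rfl, show fib 3 = 3 from rfl]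
  | (k+4), x, h => by
      simp only [Lset, Finset.mem_image, Finset.mem_union] at h
      obtain ⟨z, hz, rfl⟩ := h
      have e3 : fib (k+3) = fib (k+2) + fib (k+1) := rfl
      have e4 : fib (k+4) = fib (k+3) + fib (k+2) := rfl
      have e5 : fib (k+5) = fib (k+4) + fib (k+3) := rfl
      rcases hz with hz | hz
      · have := L_bound (k+2) z hz
        simp only [show k+2+1=k+3 from rfl, show k+4+1=k+5 from rfl] at *
        omega
      · obtain ⟨u, hu, rfl⟩ := hz
        have := L_bound (k+2) u hu
        simp only [show k+2+1=k+3 from rfl, show k+4+1=k+5 from rfl] at *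
        omega

lemma LR_bound : ∀ k x, x ∈ Lset (k+2) ∪ Rset (k+2) → fib (k+3) ≤ x ∧ x + 1 ≤ fib (k+4) := by
  intro k x h
  have e3 : fib (k+3) = fib (k+2) + fib (k+1) := rfl
  have e4 : fib (k+4) = fib (k+3) + fib (k+2) := rfl
  have p1 := fib_pos (k+1)
  rcases Finset.mem_union.1 h with h | h
  · have := L_bound (k+2) x h
    simp only [show k+2+1=k+3 from rfl] at *
    omega
  · simp only [Rset, Finset.mem_image, show k+2-1 = k+1 from rfl] at h
    obtain ⟨u, hu, rfl⟩ := h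
    have := L_bound (k+2) u hu
    simp only [show k+2+1=k+3 from rfl] at *
    omega

lemma occursAt_of {α : Type*} {T w : List α} {j : ℕ} (hj : j + w.length ≤ T.length)
    (he : (T.drop j).take w.length = w) : OccursAt T w (j+1) :=
  ⟨by omega, by omega, by simpa using he⟩

lemma occursAt_elim {α : Type*} {T w : List α} {i : ℕ} (h : OccursAt T w i) :
    ∃ j, i = j + 1 ∧ j + w.length ≤ T.length ∧ (T.drop j).take w.length = w := by
  obtain ⟨h1, h2, h3⟩ := h
  exact ⟨i - 1, by omega, by omega, h3⟩

lemma infix_occ {α : Type*} {T w : List α} (h : w <:+: T) :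
    ∃ j, j + w.length ≤ T.length ∧ (T.drop j).take w.length = w := by
  obtain ⟨s, t, h⟩ := h
  refine ⟨s.length, ?_, ?_⟩
  · rw [← h]; simp
  · rw [← h, List.append_assoc, List.drop_left, List.take_left]

lemma F4_prefix : ∀ k, F 4 <+: F (k+4)
  | 0 => List.prefix_refl _
  | (k+1) => (F4_prefix k).trans ⟨F (k+3), (F_eq (k+3)).symm⟩

lemma b_infix (k : ℕ) : [true] <:+: F (k+4) :=
  List.IsInfix.trans ⟨[false], [false,false,true], rfl⟩ (F4_prefix k).isInfix

lemma aa_infix (k : ℕ) : [false, false] <:+: F (k+4) :=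
  List.IsInfix.trans ⟨[false,true], [true], rfl⟩ (F4_prefix k).isInfix

/-- For every n ≥ 9, if every pair in L'_{n-5} ⊗ (L_{n-4} ∪ R_{n-4})
is a smallest string attractor of F_{n-2}, then every pair in L'_{n-3} ⊗ R_{n-2}
is a smallest string attractor of F_n. -/
theorem fib_valid_att_from_n_minus_2_offset :
    ∀ n : ℕ, 9 ≤ n →
      pairSet (L'set (n - 5)) (Lset (n - 4) ∪ Rset (n - 4)) ⊆ Att (F (n - 2)) →
      pairSet (L'set (n - 3)) (Rset (n - 2)) ⊆ Att (F n) := by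
  intro n hn hyp
  obtain ⟨m, rfl⟩ : ∃ m, n = m + 9 := ⟨n - 9, by omega⟩
  simp only [show m+9-5 = m+4 from rfl, show m+9-4 = m+5 from rfl,
    show m+9-3 = m+6 from rfl, show m+9-2 = m+7 from rfl] at hyp ⊢
  intro Γ hΓ
  obtain ⟨p, hp, q, hq, rfl⟩ := hΓ
  -- decompose p
  have hpd : ∃ x ∈ L'set (m+4), p = x + fib (m+6) := by
    rw [show L'set (m+6) = (L'set (m+4)).image (· + fib (m+6)) from rfl] at hp
    obtain ⟨x, hx, hxe⟩ := Finset.mem_image.1 hp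
    exact ⟨x, hx, hxe.symm⟩
  obtain ⟨x, hx, rfl⟩ := hpd
  -- decompose q
  have hqd : ∃ y ∈ Lset (m+5) ∪ Rset (m+5), q = y + fib (m+8) := by
    simp only [Rset, Finset.mem_image, show m+7-1 = m+6 from rfl] at hq
    obtain ⟨z, hz, hze⟩ := hq
    rw [show Lset (m+7)
        = ((Lset (m+5)) ∪ (Lset (m+5)).image (· + fib (m+4))).image (· + fib (m+7)) from rfl] at hz
    obtain ⟨y, hy, hye⟩ := Finset.mem_image.1 hz
    refine ⟨y, ?_, ?_⟩
    · rcases Finset.mem_union.1 hy with h | h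
      · exact Finset.mem_union_left _ h
      · refine Finset.mem_union_right _ ?_
        rw [show Rset (m+5) = (Lset (m+5)).image (· + fib (m+4)) from rfl]
        exact h
    · have e8 : fib (m+8) = fib (m+7) + fib (m+6) := rfl
      omega
  obtain ⟨y, hy', rfl⟩ := hqd
  -- numeric facts
  have hxb : fib (m+5) ≤ x ∧ x ≤ fib (m+5) + 1 := L'_bound (m+4) x hx
  have hyb : fib (m+6) ≤ y ∧ y + 1 ≤ fib (m+7) := LR_bound (m+3) y hy'
  have e6 : fib (m+6) = fib (m+5) + fib (m+4) := rfl
  have e7 : fib (m+7) = fib (m+6) + fib (m+5) := rfl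
  have e8 : fib (m+8) = fib (m+7) + fib (m+6) := rfl
  have e9 : fib (m+9) = fib (m+8) + fib (m+7) := rfl
  have p4 := fib_pos (m+4)
  have p5 := fib_pos (m+5)
  have hT9 : (F (m+9)).length = fib (m+9) := length_F _
  have hT8 : (F (m+8)).length = fib (m+8) := length_F _
  have hT7 : (F (m+7)).length = fib (m+7) := length_F _
  constructor
  · -- {p, q} is an attractor of F (m+9)
    constructor
    · intro k hk
      rw [hT9]
      rcases Finset.mem_insert.1 hk with rfl | hk
      · omega
      · rw [Finset.mem_singleton] at hk; subst hk; omega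
    · intro w hw hinf
      have hlw : 1 ≤ w.length := List.length_pos_iff.2 hw
      have memp : x + fib (m+6) ∈ ({x + fib (m+6), y + fib (m+8)} : Finset ℕ) :=
        Finset.mem_insert_self _ _
      have memq : y + fib (m+8) ∈ ({x + fib (m+6), y + fib (m+8)} : Finset ℕ) :=
        Finset.mem_insert.2 (Or.inr (Finset.mem_singleton_self _))
      -- generic finisher
      have fin1 : ∀ j k, k ∈ ({x + fib (m+6), y + fib (m+8)} : Finset ℕ) →
          j + w.length ≤ fib (m+9) → ((F (m+9)).drop j).take w.length = w →
          j < k → k ≤ j + w.length →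
          ∃ i, OccursAt (F (m+9)) w i ∧ ∃ k ∈ ({x + fib (m+6), y + fib (m+8)} : Finset ℕ),
            i ≤ k ∧ k < i + w.length := by
        intro j k hk h1 h2 h3 h4
        exact ⟨j+1, occursAt_of (by rw [hT9]; omega) h2, k, hk, by omega, by omega⟩
      -- finisher via an occurrence in F (m+7) crossing y, embedded in the suffix copy
      have useY : ∀ j, j + w.length ≤ fib (m+7) → ((F (m+7)).drop j).take w.length = w →
          j < y → y ≤ j + w.length →
          ∃ i, OccursAt (F (m+9)) w i ∧ ∃ k ∈ ({x + fib (m+6), y + fib (m+8)} : Finset ℕ),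
            i ≤ k ∧ k < i + w.length := by
        intro j h1 h2 h3 h4
        refine fin1 (fib (m+8) + j) (y + fib (m+8)) memq (by omega) ?_ (by omega) (by omega)
        rw [show F (m+9) = F (m+8) ++ F (m+7) from rfl, ← hT8, List.drop_length_add_append]
        exact h2
      by_cases hinf7 : w <:+: F (m+7)
      · -- Case I : w is a substring of F (m+7); use the induction hypothesis
        have hpair : ({x, y} : Finset ℕ) ∈ pairSet (L'set (m+4)) (Lset (m+5) ∪ Rset (m+5)) :=
          ⟨x, hx, y, hy', rfl⟩
        have hsm : IsSmallestAttractor (F (m+7)) {x, y} := hyp hpair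
        obtain ⟨i, hocc, k, hk, hik1, hik2⟩ := hsm.1.2 w hw hinf7
        obtain ⟨j, rfl, hjl, hjw⟩ := occursAt_elim hocc
        rw [hT7] at hjl
        have hkxy : k = x ∨ k = y := by
          rcases Finset.mem_insert.1 hk with rfl | hk
          · exact Or.inl rfl
          · exact Or.inr (Finset.mem_singleton.1 hk)
        rcases hkxy with hkx | hky
        · -- the occurrence crosses x
          by_cases hsmall : j + w.length ≤ fib (m+7) - 2
          · -- embed the occurrence at offset fib (m+6); it crosses x + fib (m+6)
            have h8 : F (m+8) = (F (m+6) ++ F (m+5)) ++ F (m+6) := by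
              rw [show F (m+8) = F (m+7) ++ F (m+6) from rfl,
                show F (m+7) = F (m+6) ++ F (m+5) from rfl]
            have hT : F (m+9) = F (m+6) ++ ((F (m+5) ++ F (m+6)) ++ F (m+7)) := by
              rw [show F (m+9) = F (m+8) ++ F (m+7) from rfl, h8]
              simp only [List.append_assoc]
            have ct := comm_take (m+5)
            simp only [show m+5+1 = m+6 from rfl, show m+5+2 = m+7 from rfl] at ct
            have key1 : ((F (m+9)).drop (fib (m+6))).take (fib (m+7) - 2)
                = (F (m+7)).take (fib (m+7) - 2) := by
              rw [hT, show fib (m+6) = (F (m+6)).length from (length_F _).symm, List.drop_left,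
                List.take_append_of_le_length
                  (by rw [List.length_append, length_F, length_F]; omega),
                ← ct, show F (m+7) = F (m+6) ++ F (m+5) from rfl]
            have hwin := window_eq key1 hsmall
            rw [List.drop_drop] at hwin
            exact fin1 (fib (m+6) + j) (x + fib (m+6)) memp (by omega)
              (hwin.trans hjw) (by omega) (by omega)
          · -- long occurrence: it also crosses y
            exact useY j hjl hjw (by omega) (by omega)
        · -- the occurrence crosses y
          exact useY j hjl hjw (by omega) (by omega)
      · -- Case II : w is not a substring of F (m+7)
        obtain ⟨j, hjl, hjw⟩ := infix_occ hinf
        rw [hT9] at hjl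
        have take8 : (F (m+9)).take (fib (m+8)) = (F (m+8)).take (fib (m+8)) := by
          rw [show F (m+9) = F (m+8) ++ F (m+7) from rfl, List.take_left' hT8, ← hT8,
            List.take_length]
        -- sub-case helper: w a substring of F (m+8) (but not of F (m+7)) crosses x + fib (m+6)
        have subA : w <:+: F (m+8) →
            ∃ i, OccursAt (F (m+9)) w i ∧ ∃ k ∈ ({x + fib (m+6), y + fib (m+8)} : Finset ℕ),
              i ≤ k ∧ k < i + w.length := by
          intro hw8
          obtain ⟨j', hj'l, hj'w⟩ := infix_occ hw8
          rw [hT8] at hj'l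
          rcases le_or_gt (j' + w.length) (fib (m+7)) with hc | hc
          · exfalso
            have take7 : (F (m+8)).take (fib (m+7)) = (F (m+7)).take (fib (m+7)) := by
              rw [show F (m+8) = F (m+7) ++ F (m+6) from rfl, List.take_left' hT7, ← hT7,
                List.take_length]
            have hwin : ((F (m+7)).drop j').take w.length = w := by
              rw [← window_eq take7 hc]; exact hj'w
            exact hinf7 (by rw [← hwin]; exact infix_of_window _ _ _)
          · rcases le_or_gt (fib (m+7)) j' with hc2 | hc2
            · exfalso
              obtain ⟨j2, rfl⟩ : ∃ j2, j' = fib (m+7) + j2 := ⟨j' - fib (m+7), by omega⟩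
              rw [show F (m+8) = F (m+7) ++ F (m+6) from rfl, ← hT7, List.drop_length_add_append] at hj'w
              have hw6 : w <:+: F (m+6) := by rw [← hj'w]; exact infix_of_window _ _ _
              exact hinf7 (hw6.trans (List.IsPrefix.isInfix ⟨F (m+5), rfl⟩))
            · -- the occurrence crosses positions fib (m+7) and fib (m+7) + 1
              have hww : ((F (m+9)).drop j').take w.length = w :=
                (window_eq take8 (by omega)).trans hj'w
              exact fin1 j' (x + fib (m+6)) memp (by omega) hww (by omega) (by omega)
        rcases le_or_gt (j + w.length) (fib (m+8)) with h1 | h1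
        · -- occurrence inside the prefix F (m+8)
          refine subA ?_
          have hw8 : ((F (m+8)).drop j).take w.length = w :=
            (window_eq take8 h1).symm.trans hjw
          rw [← hw8]; exact infix_of_window _ _ _
        · rcases le_or_gt (fib (m+8)) j with h2 | h2
          · -- occurrence inside the suffix F (m+7) : contradiction
            exfalso
            obtain ⟨j2, rfl⟩ : ∃ j2, j = fib (m+8) + j2 := ⟨j - fib (m+8), by omega⟩
            rw [show F (m+9) = F (m+8) ++ F (m+7) from rfl, ← hT8, List.drop_length_add_append] at hjw
            exact hinf7 (by rw [← hjw]; exact infix_of_window _ _ _)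
          · -- occurrence crosses the boundary fib (m+8)
            rcases le_or_gt (fib (m+9) - 1) (j + w.length) with h3 | h3
            · -- occurrence reaches the end: it covers y + fib (m+8)
              exact fin1 j (y + fib (m+8)) memq (by omega) hjw (by omega) (by omega)
            · -- strictly inside the first fib (m+9) - 2 positions: use near-commutation
              have ct := comm_take (m+7)
              simp only [show m+7+1 = m+8 from rfl, show m+7+2 = m+9 from rfl] at ct
              have hbig : (F (m+9)).take (fib (m+9) - 2)
                  = (F (m+7) ++ F (m+8)).take (fib (m+9) - 2) := by
                rw [show F (m+9) = F (m+8) ++ F (m+7) from rfl]; exact ct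
              have hw2 : ((F (m+7) ++ F (m+8)).drop j).take w.length = w :=
                (window_eq hbig (by omega)).symm.trans hjw
              rcases le_or_gt (fib (m+7)) j with h4 | h4
              · -- shifted occurrence inside F (m+8)
                refine subA ?_
                obtain ⟨j2, rfl⟩ : ∃ j2, j = fib (m+7) + j2 := ⟨j - fib (m+7), by omega⟩
                rw [← hT7, List.drop_length_add_append] at hw2
                rw [← hw2]; exact infix_of_window _ _ _
              · -- the original occurrence covers x + fib (m+6)
                exact fin1 j (x + fib (m+6)) memp (by omega) hjw (by omega) (by omega)
  · -- minimality
    intro Γ' hΓ'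
    have hcard2 : 2 ≤ Γ'.card := by
      obtain ⟨i1, hocc1, k1, hk1, h11, h12⟩ := hΓ'.2 [true] (by simp) (b_infix (m+5))
      obtain ⟨i2, hocc2, k2, hk2, h21, h22⟩ := hΓ'.2 [false, false] (by simp) (aa_infix (m+5))
      obtain ⟨j1, rfl, hj1l, hj1w⟩ := occursAt_elim hocc1
      obtain ⟨j2, rfl, hj2l, hj2w⟩ := occursAt_elim hocc2
      have hj1w' : ((F (m+9)).drop j1).take 1 = [true] := hj1w
      have hj2w' : ((F (m+9)).drop j2).take 2 = [false, false] := hj2w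
      have h12' : k1 = j1 + 1 := by
        simp only [List.length_cons, List.length_nil] at h12; omega
      have h22' : k2 = j2 + 1 ∨ k2 = j2 + 2 := by
        simp only [List.length_cons, List.length_nil] at h22; omega
      have hv1 : ∃ u, (F (m+9)).drop j1 = true :: u := by
        rcases hdj : (F (m+9)).drop j1 with _ | ⟨a, u⟩
        · rw [hdj] at hj1w'; simp at hj1w'
        · rw [hdj] at hj1w'; simp at hj1w'
          exact ⟨u, by rw [hj1w']⟩
      have hv2 : ∃ u, (F (m+9)).drop j2 = false :: false :: u := by
        rcases hdj : (F (m+9)).drop j2 with _ | ⟨a, (_ | ⟨b, u⟩)⟩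
        · rw [hdj] at hj2w'; simp at hj2w'
        · rw [hdj] at hj2w'; simp at hj2w'
        · rw [hdj] at hj2w'; simp at hj2w'
          exact ⟨u, by rw [hj2w'.1, hj2w'.2]⟩
      obtain ⟨u1, hv1⟩ := hv1
      obtain ⟨u2, hv2⟩ := hv2
      have hne : k1 ≠ k2 := by
        intro he
        rcases h22' with h | h
        · have hjj : j1 = j2 := by omega
          rw [hjj, hv2] at hv1
          simp at hv1
        · have hjj : j1 = j2 + 1 := by omega
          have htl := congrArg List.tail hv2
          rw [List.tail_drop] at htl
          rw [hjj, htl] at hv1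
          simp at hv1
      have h1lt : 1 < Γ'.card := Finset.one_lt_card.2 ⟨k1, hk1, k2, hk2, hne⟩
      omega
    have hcle : ({x + fib (m+6), y + fib (m+8)} : Finset ℕ).card ≤ 2 := by
      have h1 := Finset.card_insert_le (x + fib (m+6)) ({y + fib (m+8)} : Finset ℕ)
      simp at h1 ⊢
      omega
    omega
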